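/- Let F be a field with |F| ≥ k+1 and let ℓ_1,…,ℓ_k ∈ F[x_1,…,x_n] be polynomials of total degree exactly 1 such that for all i ≠ j, ℓ_i is not a scalar multiple of ℓ_j. Then there exist points u_1,…,u_k ∈ F^n such that for all i, j ∈ {1,…,k}, ℓ_i(u_j) = 0 if and only if i = j. -/

import Mathlib

/-!
Fix `j` and a variable `X m` occurring in `ℓ j` with coefficient `a ≠ 0`. Moving a point `x`
along the `m`-th axis by `-ℓ j (x) / a` lands on the hyperplane `ℓ j = 0`, and there `ℓ i` takes
the value at `x` of `r i = ℓ i - (b i / a) • ℓ j`, where `b i` is the coefficient of `X m` in `ℓ i`.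
Each `r i` with `i ≠ j` is a nonzero polynomial of degree at most one, so their product has degree
at most `k - 1 < |F|` and hence, by the combinatorial Nullstellensatz, does not vanish at some `x`.
-/

namespace MvPolynomial

variable {σ R : Type*}

theorem exists_coeff_single_ne_zero_of_totalDegree_eq_one [CommSemiring R]
    {p : MvPolynomial σ R} (hp : p.totalDegree = 1) :
    ∃ m, p.coeff (Finsupp.single m 1) ≠ 0 := by
  have hne : p.support.Nonempty := by
    rw [Finset.nonempty_iff_ne_empty]
    intro h
    simp [totalDegree, h] at hp
  obtain ⟨d, hd, hdeg⟩ := Finset.exists_mem_eq_sup _ hne fun d ↦ d.sum fun _ e ↦ e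
  obtain ⟨m, rfl⟩ := (Finsupp.sum_eq_one_iff d).mp (hdeg ▸ hp)
  exact ⟨m, mem_support_iff.mp hd⟩

section Affine

variable [CommRing R] [DecidableEq σ]

theorem prod_add_single_pow_of_sum_le_one {d : σ →₀ ℕ} (hd : (d.sum fun _ e ↦ e) ≤ 1)
    (x : σ → R) (m : σ) (t : R) :
    ∏ i ∈ d.support, (x + Pi.single m t : σ → R) i ^ d i =
      (∏ i ∈ d.support, x i ^ d i) + if d = Finsupp.single m 1 then t else 0 := by
  rcases Nat.le_one_iff_eq_zero_or_eq_one.mp hd with hd0 | hd1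
  · obtain rfl : d = 0 := (Finsupp.degree_eq_zero_iff d).mp hd0
    simp [(Finsupp.single_ne_zero.mpr one_ne_zero).symm]
  · obtain ⟨m', rfl⟩ := (Finsupp.sum_eq_one_iff d).mp hd1
    simp [Pi.single_apply, Finsupp.single_left_inj one_ne_zero, eq_comm]

theorem eval_add_single_of_totalDegree_le_one {p : MvPolynomial σ R} (hp : p.totalDegree ≤ 1)
    (x : σ → R) (m : σ) (t : R) :
    eval (x + Pi.single m t) p = eval x p + t * p.coeff (Finsupp.single m 1) := by
  rw [eval_eq, eval_eq, Finset.sum_congr rfl fun d hd ↦ by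
    rw [prod_add_single_pow_of_sum_le_one ((le_totalDegree hd).trans hp)]]
  simp only [mul_add, Finset.sum_add_distrib, mul_ite, mul_zero, Finset.sum_ite_eq']
  split_ifs with h
  · ring
  · rw [notMem_support_iff.mp h, mul_zero, add_zero]

end Affine

section Nonvanishing

variable [CommRing R] [IsDomain R] [Finite σ]

theorem exists_eval_ne_zero_of_totalDegree_lt_card {p : MvPolynomial σ R} (hp : p ≠ 0)
    (hdeg : (p.totalDegree : Cardinal) < Cardinal.mk R) :
    ∃ x, eval x p ≠ 0 := by
  obtain ⟨S, hS⟩ := Cardinal.exists_finset_eq_card (n := p.totalDegree + 1)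
    (by exact_mod_cast Cardinal.natCast_add_one_le_iff.mpr hdeg)
  by_contra! hzero
  exact hp <| eq_zero_of_eval_zero_at_prod_finset p (fun _ ↦ S)
    (fun i ↦ (degreeOf_le_totalDegree p i).trans_lt (by omega)) (fun x _ ↦ hzero x)

theorem exists_eval_ne_zero_of_sum_totalDegree_lt_card {ι : Type*} (s : Finset ι)
    {p : ι → MvPolynomial σ R} (hp : ∀ i ∈ s, p i ≠ 0)
    (hdeg : ((∑ i ∈ s, (p i).totalDegree : ℕ) : Cardinal) < Cardinal.mk R) :
    ∃ x, ∀ i ∈ s, eval x (p i) ≠ 0 := by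
  obtain ⟨x, hx⟩ := exists_eval_ne_zero_of_totalDegree_lt_card (Finset.prod_ne_zero_iff.mpr hp)
    (lt_of_le_of_lt (by exact_mod_cast totalDegree_finsetProd s p) hdeg)
  exact ⟨x, by simpa [Finset.prod_ne_zero_iff] using hx⟩

end Nonvanishing

variable {F : Type*} [Field F]

theorem eval_add_single_neg_div_coeff [DecidableEq σ] {p : MvPolynomial σ F}
    (hp : p.totalDegree ≤ 1) (q : MvPolynomial σ F) (x : σ → F) (m : σ) :
    eval (x + Pi.single m (-eval x q / q.coeff (Finsupp.single m 1))) p =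
      eval x (p - (p.coeff (Finsupp.single m 1) / q.coeff (Finsupp.single m 1)) • q) := by
  rw [eval_add_single_of_totalDegree_le_one hp, map_sub, smul_eval]
  ring

theorem exists_eval_eq_zero_and_eval_ne_zero [Finite σ] {ι : Type*}
    {q : MvPolynomial σ F} (hq : q.totalDegree = 1) (s : Finset ι) {p : ι → MvPolynomial σ F}
    (hp : ∀ i ∈ s, (p i).totalDegree ≤ 1) (hpq : ∀ i ∈ s, ∀ c : F, p i ≠ c • q)
    (hs : (s.card : Cardinal) < Cardinal.mk F) :
    ∃ x, eval x q = 0 ∧ ∀ i ∈ s, eval x (p i) ≠ 0 := by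
  classical
  obtain ⟨m, hm⟩ := exists_coeff_single_ne_zero_of_totalDegree_eq_one hq
  set r : ι → MvPolynomial σ F := fun i ↦
    p i - ((p i).coeff (Finsupp.single m 1) / q.coeff (Finsupp.single m 1)) • q
  have hr : ∀ i ∈ s, r i ≠ 0 := fun i hi h ↦ hpq i hi _ (sub_eq_zero.mp h)
  have hrdeg : ∀ i ∈ s, (r i).totalDegree ≤ 1 := fun i hi ↦
    (totalDegree_sub _ _).trans <| max_le (hp i hi) <| (totalDegree_smul_le _ _).trans hq.le
  have hsum : ∑ i ∈ s, (r i).totalDegree ≤ s.card := by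
    simpa using Finset.sum_le_card_nsmul s _ 1 hrdeg
  obtain ⟨x, hx⟩ := exists_eval_ne_zero_of_sum_totalDegree_lt_card s hr <|
    lt_of_le_of_lt (Nat.cast_le.mpr hsum) hs
  refine ⟨x + Pi.single m (-eval x q / q.coeff (Finsupp.single m 1)), ?_, fun i hi ↦ ?_⟩
  · rw [eval_add_single_neg_div_coeff hq.le, div_self hm, one_smul, sub_self, map_zero]
  · rw [eval_add_single_neg_div_coeff (hp i hi)]
    exact hx i hi

end MvPolynomial

/-- If `|F| ≥ k+1` and `ℓ 1, …, ℓ k` are degree-1 polynomials, pairwise not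
scalar multiples of one another, then there are points `u 1, …, u k ∈ F^n` such that
`ℓ i (u j) = 0` iff `i = j`. -/
theorem exists_points_vanishing_iff {F : Type*} [Field F] (n k : ℕ)
    (hF : ((k + 1 : ℕ) : Cardinal) ≤ Cardinal.mk F)
    (ℓ : Fin k → MvPolynomial (Fin n) F)
    (hdeg : ∀ i, (ℓ i).totalDegree = 1)
    (hpair : ∀ i j, i ≠ j → ∀ c : F, ℓ i ≠ c • ℓ j) :
    ∃ u : Fin k → (Fin n → F),
      ∀ i j, MvPolynomial.eval (u j) (ℓ i) = 0 ↔ i = j := by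
  have hcard (j : Fin k) : ((Finset.univ.erase j).card : Cardinal) < Cardinal.mk F :=
    lt_of_lt_of_le (by simp) hF
  choose u hu_zero hu_ne using fun j ↦ MvPolynomial.exists_eval_eq_zero_and_eval_ne_zero
    (hdeg j) (Finset.univ.erase j) (fun i _ ↦ (hdeg i).le)
    (fun i hi ↦ hpair i j (Finset.ne_of_mem_erase hi)) (hcard j)
  refine ⟨u, fun i j ↦ ⟨fun h ↦ ?_, ?_⟩⟩
  · by_contra hij
    exact hu_ne j i (Finset.mem_erase.mpr ⟨hij, Finset.mem_univ i⟩) h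
  · rintro rfl
    exact hu_zero i
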